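/- Let d ≥ 1 and let l : ℝ^d → ℝ be measurable with l(α) ≤ k + δᵀα for all α, for some k ∈ ℝ and δ ∈ ℝ^d. Let Q and Q̃ be symmetric positive definite d×d matrices, let μ, μ* ∈ ℝ^d, and define the target f(α) = exp(l(α))·N(α|μ, Q⁻¹). Let n ≥ 1 be real and assume Q̃ − n(Q̃ − Q) ≻ 0. Let g₁(α) = N(α|μ*, Q̃⁻¹), let g₂ be any probability density on ℝ^d, let 0 < π < 1, and define the mixture importance density g(α) = π g₁(α) + (1−π) g₂(α). Then g(α) > 0 for all α, and for every real m with 1 ≤ m ≤ n the integral ∫_{ℝ^d} (f(α)/g(α))^m g(α) dα is finite. -/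

import Mathlib

/-! Since `g ≥ π g₁` and `m ≥ 1`, `(f/g)^m g ≤ π^(1-m) f^m g₁^(1-m)`. With the linear bound on `l`
this is, up to a constant, the exponential of a quadratic polynomial whose quadratic part has matrix
`(Q̃ - m (Q̃ - Q))/2`. That matrix is positive definite because `m ↦ Q̃ - m (Q̃ - Q)` is affine and
positive definite at `m = 1` (where it is `Q`) and at `m = n`. Such exponentials are integrable,
since a positive definite form dominates `ε |α|²` on `ℝ^d` by compactness of the unit sphere. -/

open MeasureTheory Matrix

/-- The Gaussian density `N(·|μ, P⁻¹)` on `ℝ^d` with mean `μ` and precision matrix `P`. -/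
noncomputable def gaussDensity {d : ℕ} (μ : Fin d → ℝ) (P : Matrix (Fin d) (Fin d) ℝ)
    (α : Fin d → ℝ) : ℝ :=
  (2 * Real.pi) ^ (-(d : ℝ) / 2) * Real.sqrt P.det *
    Real.exp (-(1 / 2) * ((α - μ) ⬝ᵥ P.mulVec (α - μ)))

theorem exists_pos_mul_norm_sq_le {E : Type*} [NormedAddCommGroup E] [NormedSpace ℝ E]
    [FiniteDimensional ℝ E] {q : E → ℝ} (hq : Continuous q)
    (hsmul : ∀ (c : ℝ) x, q (c • x) = c ^ 2 * q x) (hpos : ∀ x ≠ 0, 0 < q x) :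
    ∃ ε > 0, ∀ x, ε * ‖x‖ ^ 2 ≤ q x := by
  have hq0 : q 0 = 0 := by simpa using hsmul 0 0
  cases subsingleton_or_nontrivial E with
  | inl _ => exact ⟨1, one_pos, fun x => by simp [Subsingleton.elim x 0, hq0]⟩
  | inr _ =>
    obtain ⟨u, hu, hmin⟩ := (isCompact_sphere (0 : E) 1).exists_isMinOn
      (NormedSpace.sphere_nonempty.2 zero_le_one) hq.continuousOn
    have hu1 : ‖u‖ = 1 := by simpa using hu
    refine ⟨q u, hpos u (by rintro rfl; simp at hu1), fun x => ?_⟩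
    rcases eq_or_ne x 0 with rfl | hx
    · simp [hq0]
    have hx' : ‖x‖⁻¹ • x ∈ Metric.sphere (0 : E) 1 := by
      simp [norm_smul, hx]
    calc q u * ‖x‖ ^ 2 ≤ q (‖x‖⁻¹ • x) * ‖x‖ ^ 2 := by gcongr; exact hmin hx'
      _ = q x := by rw [hsmul]; field_simp

theorem Matrix.PosDef.exists_pos_mul_sum_sq_le {ι : Type*} [Fintype ι] {M : Matrix ι ι ℝ}
    (hM : M.PosDef) : ∃ ε > 0, ∀ x : ι → ℝ, ε * ∑ i, x i ^ 2 ≤ x ⬝ᵥ M *ᵥ x := by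
  obtain ⟨ε, hε, h⟩ := exists_pos_mul_norm_sq_le (E := EuclideanSpace ℝ ι)
    (q := fun v => v.ofLp ⬝ᵥ M *ᵥ v.ofLp) (by fun_prop)
    (fun c v => by simp [mulVec_smul]; ring)
    (fun v hv => hM.dotProduct_mulVec_pos (by simpa using hv))
  exact ⟨ε, hε, fun x => by simpa [EuclideanSpace.real_norm_sq_eq] using h (WithLp.toLp 2 x)⟩

theorem integrable_exp_neg_mul_sum_sq_add {ι : Type*} [Fintype ι] {b : ℝ} (hb : 0 < b)
    (w : ι → ℝ) :
    Integrable fun x : ι → ℝ => Real.exp (-b * ∑ i, x i ^ 2 + w ⬝ᵥ x) := by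
  refine (GaussianFourier.integrable_cexp_neg_mul_sum_add (b := (b : ℂ)) (by simpa using hb)
    (fun i => (w i : ℂ))).re.congr (.of_forall fun x => ?_)
  simp only [dotProduct]
  norm_cast

theorem Matrix.PosDef.integrable_exp_neg_dotProduct_mulVec_add {ι : Type*} [Fintype ι]
    {M : Matrix ι ι ℝ} (hM : M.PosDef) (w : ι → ℝ) :
    Integrable fun x : ι → ℝ => Real.exp (-(x ⬝ᵥ M *ᵥ x) + w ⬝ᵥ x) := by
  obtain ⟨ε, hε, hcoer⟩ := hM.exists_pos_mul_sum_sq_le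
  refine (integrable_exp_neg_mul_sum_sq_add hε w).mono' (by fun_prop) (.of_forall fun x => ?_)
  rw [Real.norm_of_nonneg (Real.exp_nonneg _)]
  gcongr
  linarith [hcoer x]

theorem Matrix.PosDef.sub_smul_of_mem_Icc {ι : Type*} [Fintype ι] {A C : Matrix ι ι ℝ}
    {a b s : ℝ} (ha : (A - a • C).PosDef) (hb : (A - b • C).PosDef) (hs : s ∈ Set.Icc a b) :
    (A - s • C).PosDef := by
  obtain ⟨has, hsb⟩ := hs
  rcases has.eq_or_lt with rfl | has
  · exact ha
  set θ := (s - a) / (b - a)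
  have hθ0 : 0 < θ := div_pos (by linarith) (by linarith)
  have hθ1 : θ ≤ 1 := (div_le_one (by linarith)).2 (by linarith)
  have hs : s = (1 - θ) * a + θ * b := by
    have : θ * (b - a) = s - a := div_mul_cancel₀ _ (by linarith)
    linarith
  have hcomb : A - s • C = (1 - θ) • (A - a • C) + θ • (A - b • C) := by
    rw [hs]; module
  rw [hcomb]
  exact PosDef.posSemidef_add (ha.posSemidef.smul (sub_nonneg.2 hθ1)) (hb.smul hθ0)

theorem Matrix.IsHermitian.sub_dotProduct_mulVec_sub {ι : Type*} [Fintype ι]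
    {M : Matrix ι ι ℝ} (hM : M.IsHermitian) (x y : ι → ℝ) :
    (x - y) ⬝ᵥ M *ᵥ (x - y) = x ⬝ᵥ M *ᵥ x - 2 * (M *ᵥ y ⬝ᵥ x) + y ⬝ᵥ M *ᵥ y := by
  have hsymm : y ⬝ᵥ M *ᵥ x = M *ᵥ y ⬝ᵥ x := by
    rw [dotProduct_mulVec, ← mulVec_transpose, ← conjTranspose_eq_transpose_of_trivial, hM.eq,
      dotProduct_comm]
  rw [mulVec_sub, sub_dotProduct, dotProduct_sub, dotProduct_sub, hsymm, dotProduct_comm x (M *ᵥ y)]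
  ring

theorem Real.div_rpow_mul_le {F g p m : ℝ} (hF : 0 ≤ F) (hp : 0 < p) (hpg : p ≤ g)
    (hm : 1 ≤ m) : (F / g) ^ m * g ≤ F ^ m * p ^ (1 - m) := by
  have hg : 0 < g := hp.trans_le hpg
  calc (F / g) ^ m * g = F ^ m * g ^ (1 - m) := by
        rw [Real.div_rpow hF hg.le, Real.rpow_sub hg, Real.rpow_one]; field_simp
    _ ≤ F ^ m * p ^ (1 - m) :=
        mul_le_mul_of_nonneg_left (Real.rpow_le_rpow_of_nonpos hp hpg (by linarith))
          (by positivity)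

theorem gaussDensity_pos {d : ℕ} (μ : Fin d → ℝ) {P : Matrix (Fin d) (Fin d) ℝ} (hP : P.PosDef)
    (α : Fin d → ℝ) : 0 < gaussDensity μ P α := by
  unfold gaussDensity
  have := hP.det_pos
  positivity

theorem gaussDensity_rpow_mul_rpow {d : ℕ} {P R : Matrix (Fin d) (Fin d) ℝ}
    (hP : P.IsHermitian) (hR : R.IsHermitian) (μ ν : Fin d → ℝ) (s t : ℝ) :
    ∃ K ≥ 0, ∃ w : Fin d → ℝ, ∀ α, gaussDensity μ P α ^ s * gaussDensity ν R α ^ t =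
      K * Real.exp (-(α ⬝ᵥ ((s / 2) • P + (t / 2) • R) *ᵥ α) + w ⬝ᵥ α) := by
  set Z : Matrix (Fin d) (Fin d) ℝ → ℝ := fun P => (2 * Real.pi) ^ (-(d : ℝ) / 2) * √P.det
  have hZ : ∀ P, 0 ≤ Z P := fun P => by positivity
  refine ⟨Z P ^ s * Z R ^ t * Real.exp (-(s / 2) * (μ ⬝ᵥ P *ᵥ μ) - (t / 2) * (ν ⬝ᵥ R *ᵥ ν)),
    by have := hZ P; have := hZ R; positivity, s • P *ᵥ μ + t • R *ᵥ ν, fun α => ?_⟩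
  have hexp : -(1 / 2) * ((α - μ) ⬝ᵥ P *ᵥ (α - μ)) * s + -(1 / 2) * ((α - ν) ⬝ᵥ R *ᵥ (α - ν)) * t
      = -(s / 2) * (μ ⬝ᵥ P *ᵥ μ) - (t / 2) * (ν ⬝ᵥ R *ᵥ ν)
        + (-(α ⬝ᵥ ((s / 2) • P + (t / 2) • R) *ᵥ α) + (s • P *ᵥ μ + t • R *ᵥ ν) ⬝ᵥ α) := by
    rw [hP.sub_dotProduct_mulVec_sub, hR.sub_dotProduct_mulVec_sub]
    simp only [add_mulVec, smul_mulVec, dotProduct_add, add_dotProduct, dotProduct_smul,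
      smul_dotProduct, smul_eq_mul]
    ring
  calc gaussDensity μ P α ^ s * gaussDensity ν R α ^ t
      = Z P ^ s * Z R ^ t * Real.exp (-(1 / 2) * ((α - μ) ⬝ᵥ P *ᵥ (α - μ)) * s
          + -(1 / 2) * ((α - ν) ⬝ᵥ R *ᵥ (α - ν)) * t) := by
        simp only [gaussDensity]
        rw [Real.mul_rpow (hZ P) (Real.exp_nonneg _), Real.mul_rpow (hZ R) (Real.exp_nonneg _),
          ← Real.exp_mul, ← Real.exp_mul, Real.exp_add]
        ring
    _ = _ := by rw [hexp, Real.exp_add]; ring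

theorem stmt18_general (d : ℕ)
    (l : (Fin d → ℝ) → ℝ)
    (k : ℝ) (δ : Fin d → ℝ) (hbound : ∀ α, l α ≤ k + δ ⬝ᵥ α)
    (Q Qt : Matrix (Fin d) (Fin d) ℝ) (hQ : Q.PosDef) (hQt : Qt.PosDef)
    (μ μs : Fin d → ℝ)
    (f : (Fin d → ℝ) → ℝ) (hf : f = fun α => Real.exp (l α) * gaussDensity μ Q α)
    (n : ℝ)
    (hpd : (Qt - n • (Qt - Q)).PosDef)
    (g₂ : (Fin d → ℝ) → ℝ) (hg₂0 : ∀ α, 0 ≤ g₂ α)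
    (π : ℝ) (hπ0 : 0 < π) (hπ1 : π < 1)
    (g : (Fin d → ℝ) → ℝ)
    (hg : g = fun α => π * gaussDensity μs Qt α + (1 - π) * g₂ α) :
    (∀ α, 0 < g α) ∧
    ∀ m : ℝ, 1 ≤ m → m ≤ n →
      ∫⁻ α, ENNReal.ofReal ((f α / g α) ^ m * g α) < ⊤ := by
  subst hf hg
  have hpos : ∀ α, 0 < π * gaussDensity μs Qt α :=
    fun α => mul_pos hπ0 (gaussDensity_pos μs hQt α)
  have hmix : ∀ α, π * gaussDensity μs Qt α ≤ π * gaussDensity μs Qt α + (1 - π) * g₂ α :=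
    fun α => le_add_of_nonneg_right (mul_nonneg (by linarith) (hg₂0 α))
  refine ⟨fun α => (hpos α).trans_le (hmix α), fun m hm1 hmn => ?_⟩
  have hM : ((m / 2) • Q + ((1 - m) / 2) • Qt).PosDef := by
    convert (PosDef.sub_smul_of_mem_Icc (by simpa using hQ) hpd ⟨hm1, hmn⟩).smul
      (by norm_num : (0 : ℝ) < 1 / 2) using 1
    module
  obtain ⟨K, hK, w, hKw⟩ :=
    gaussDensity_rpow_mul_rpow hQ.isHermitian hQt.isHermitian μ μs m (1 - m)
  refine (lintegral_mono fun α => ENNReal.ofReal_le_ofReal ?_).trans_lt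
    (((hM.integrable_exp_neg_dotProduct_mulVec_add (w + m • δ)).const_mul
      (π ^ (1 - m) * K * Real.exp (m * k))).lintegral_lt_top)
  calc _ ≤ (Real.exp (l α) * gaussDensity μ Q α) ^ m * (π * gaussDensity μs Qt α) ^ (1 - m) :=
        Real.div_rpow_mul_le (mul_pos (Real.exp_pos _) (gaussDensity_pos μ hQ α)).le (hpos α)
          (hmix α) hm1
    _ = π ^ (1 - m) * K * Real.exp (m * l α + (-(α ⬝ᵥ ((m / 2) • Q + ((1 - m) / 2) • Qt) *ᵥ α)
          + w ⬝ᵥ α)) := by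
        rw [Real.mul_rpow (Real.exp_nonneg _) (gaussDensity_pos μ hQ α).le,
          Real.mul_rpow hπ0.le (gaussDensity_pos μs hQt α).le, ← Real.exp_mul, Real.exp_add,
          mul_comm (l α)]
        linear_combination (π ^ (1 - m) * Real.exp (m * l α)) * hKw α
    _ ≤ _ := by
        rw [mul_assoc _ (Real.exp (m * k)), ← Real.exp_add, add_dotProduct, smul_dotProduct,
          smul_eq_mul]
        gcongr _ * Real.exp ?_
        nlinarith [hbound α]

theorem stmt18 (d : ℕ) (hd : 1 ≤ d)
    (l : (Fin d → ℝ) → ℝ) (hl : Measurable l)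
    (k : ℝ) (δ : Fin d → ℝ) (hbound : ∀ α, l α ≤ k + δ ⬝ᵥ α)
    (Q Qt : Matrix (Fin d) (Fin d) ℝ) (hQ : Q.PosDef) (hQt : Qt.PosDef)
    (μ μs : Fin d → ℝ)
    (f : (Fin d → ℝ) → ℝ) (hf : f = fun α => Real.exp (l α) * gaussDensity μ Q α)
    (n : ℝ) (hn : 1 ≤ n)
    (hpd : (Qt - n • (Qt - Q)).PosDef)
    (g₂ : (Fin d → ℝ) → ℝ) (hg₂meas : Measurable g₂) (hg₂0 : ∀ α, 0 ≤ g₂ α)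
    (hg₂int : ∫ α, g₂ α = 1)
    (π : ℝ) (hπ0 : 0 < π) (hπ1 : π < 1)
    (g : (Fin d → ℝ) → ℝ)
    (hg : g = fun α => π * gaussDensity μs Qt α + (1 - π) * g₂ α) :
    (∀ α, 0 < g α) ∧
    ∀ m : ℝ, 1 ≤ m → m ≤ n →
      ∫⁻ α, ENNReal.ofReal ((f α / g α) ^ m * g α) < ⊤ :=
  stmt18_general d l k δ hbound Q Qt hQ hQt μ μs f hf n hpd g₂ hg₂0 π hπ0 hπ1 g hg
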